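/- Define a map ϖ_a : k𝒞₊ → k𝒞 on basis elements by ϖ_a(α) = π_a(α) if α(1) = 1 and ϖ_a(α) = 0 if α(1) ≠ 1, extended k-linearly. Then ϖ_a is a surjective k-algebra homomorphism whose kernel is the span ℑ_a of the morphisms α with α(1) ≠ 1; hence k𝒞₊/ℑ_a ≅ k𝒞. -/

import Mathlib

/-- Morphisms of the category with objects `[o m]` and strictly increasing maps;
`o = fun m => m + 1` gives `𝒞₊`, and `o = id` gives `𝒞`. -/
def MorF (o : ℕ → ℕ) : Type := Σ m n : ℕ, Fin (o m) ↪o Fin (o n)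

variable {o : ℕ → ℕ} (k : Type) [CommRing k]

/-- Product of two basis elements of the category algebra. -/
noncomputable def mulB (a b : MorF o) : MorF o →₀ k :=
  if h : b.2.1 = a.1 then
    Finsupp.single ⟨b.1, a.2.1, (h ▸ b.2.2 : Fin (o b.1) ↪o Fin (o a.1)).trans a.2.2⟩ 1
  else 0

/-- The multiplication of the category algebra, extended bilinearly. -/
noncomputable def algMul (x y : MorF o →₀ k) : MorF o →₀ k :=
  x.sum fun a c => y.sum fun b d => (c * d) • mulB k a b

/-- `π_a` on a strictly increasing map `[m+1] → [n+1]`: `i ↦ α(i+1) - 1`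
(well defined since `α(i+1) > α(0) ≥ 0`). -/
def piAEmb {m n : ℕ} (f : Fin (m + 1) ↪o Fin (n + 1)) : Fin m ↪o Fin n :=
  OrderEmbedding.ofStrictMono
    (fun i => (f i.succ).pred (Fin.pos_iff_ne_zero.mp
      (lt_of_le_of_lt (Fin.zero_le _) (f.strictMono (Fin.succ_pos i)))))
    (by
      intro i j h
      have h1 := Fin.lt_def.mp (f.strictMono (Fin.succ_lt_succ_iff.mpr h))
      have h2 := Fin.lt_def.mp (f.strictMono (Fin.succ_pos i))
      simp only [Fin.lt_def, Fin.coe_pred]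
      omega)

/-- The value of `ϖ_a` on a basis morphism: `π_a(α)` if `α(1) = 1`, and `0`
otherwise. -/
noncomputable def varpiBasis (a : MorF (fun m => m + 1)) : MorF id →₀ k :=
  if a.2.2 0 = 0 then Finsupp.single ⟨a.1, a.2.1, piAEmb a.2.2⟩ 1 else 0

/-- The `k`-linear map `ϖ_a : k𝒞₊ → k𝒞`. -/
noncomputable def varpiA : (MorF (fun m => m + 1) →₀ k) →ₗ[k] (MorF id →₀ k) :=
  Finsupp.lsum k fun a => LinearMap.toSpanSingleton k _ (varpiBasis k a)

/-- The `k`-submodule `ℑ_a` spanned by the morphisms `α` with `α(1) ≠ 1`. -/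
noncomputable def IdealA : Submodule k (MorF (fun m => m + 1) →₀ k) :=
  Submodule.span k
    {x | ∃ a : MorF (fun m => m + 1), a.2.2 0 ≠ 0 ∧ x = Finsupp.single a 1}

/-!
`π_a` is compatible with composition, `π_a(β ∘ α) = π_a(β) ∘ π_a(α)`, and `β ∘ α` fixes `0` iff
both `α` and `β` do (a strictly increasing map can only send `0` to `0`). So `ϖ_a` is multiplicative on
basis elements, hence everywhere since both sides of the identity are bilinear.

On maps fixing `0`, `π_a` is inverted by `f ↦ (0 ↦ 0, i + 1 ↦ f i + 1)`. This lift induces a linear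
section `σ` of `ϖ_a`, which gives surjectivity, and `x - σ (ϖ_a x) ∈ ℑ_a` for every `x`, so
`ker ϖ_a ⊆ ℑ_a`; the other inclusion holds because `ϖ_a` kills the generators of `ℑ_a`.
-/

section Embeddings

variable {l m n : ℕ}

lemma trans_apply_zero_eq_zero_iff (g : Fin (l + 1) ↪o Fin (m + 1))
    (f : Fin (m + 1) ↪o Fin (n + 1)) : (g.trans f) 0 = 0 ↔ g 0 = 0 ∧ f 0 = 0 := by
  refine ⟨fun h => ?_, fun ⟨hg, hf⟩ => by simp [hg, hf]⟩
  have hg : g 0 = 0 := Fin.le_zero_iff.mp (f.strictMono.minimal_preimage_bot h 0)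
  exact ⟨hg, by simpa [hg] using h⟩

lemma succ_piAEmb_apply (f : Fin (m + 1) ↪o Fin (n + 1)) (i : Fin m) :
    (piAEmb f i).succ = f i.succ := by
  simp [piAEmb, OrderEmbedding.ofStrictMono]

lemma piAEmb_trans (g : Fin (l + 1) ↪o Fin (m + 1)) (f : Fin (m + 1) ↪o Fin (n + 1)) :
    piAEmb (g.trans f) = (piAEmb g).trans (piAEmb f) :=
  RelEmbedding.ext fun i => Fin.succ_injective _ <| by simp [succ_piAEmb_apply]

def liftEmb (f : Fin m ↪o Fin n) : Fin (m + 1) ↪o Fin (n + 1) :=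
  OrderEmbedding.ofStrictMono (Fin.cases 0 fun i => (f i).succ) fun i j h => by
    induction j using Fin.cases with
    | zero => exact absurd h (Fin.not_lt_zero i)
    | succ j =>
      induction i using Fin.cases with
      | zero => exact Fin.succ_pos _
      | succ i => simpa using f.strictMono (Fin.succ_lt_succ_iff.mp h)

@[simp] lemma liftEmb_zero (f : Fin m ↪o Fin n) : liftEmb f 0 = 0 := rfl

@[simp] lemma liftEmb_succ (f : Fin m ↪o Fin n) (i : Fin m) : liftEmb f i.succ = (f i).succ := rfl

lemma piAEmb_liftEmb (f : Fin m ↪o Fin n) : piAEmb (liftEmb f) = f :=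
  RelEmbedding.ext fun i => Fin.succ_injective _ <| by simp [succ_piAEmb_apply]

lemma liftEmb_piAEmb (f : Fin (m + 1) ↪o Fin (n + 1)) (h : f 0 = 0) : liftEmb (piAEmb f) = f := by
  ext i
  induction i using Fin.cases with
  | zero => simp [h]
  | succ i => simp [succ_piAEmb_apply]

end Embeddings

/-- Anonymous constructors for `MorF o` elaborate at the unfolded `Sigma` type, on which
lemmas about `MorF o` do not rewrite; terms built with `MorF.mk` keep the type `MorF o`. -/
def MorF.mk (m n : ℕ) (f : Fin (o m) ↪o Fin (o n)) : MorF o := ⟨m, n, f⟩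

lemma MorF.exists_eq_mk (a : MorF o) : ∃ m n f, a = MorF.mk m n f := ⟨_, _, _, rfl⟩

noncomputable def algMulₗ : (MorF o →₀ k) →ₗ[k] (MorF o →₀ k) →ₗ[k] (MorF o →₀ k) :=
  Finsupp.linearCombination k fun a => Finsupp.linearCombination k (mulB k a)

lemma algMul_eq_algMulₗ (x y : MorF o →₀ k) : algMul k x y = algMulₗ k x y := by
  simp [algMul, algMulₗ, Finsupp.linearCombination_apply, LinearMap.finsupp_sum_apply,
    Finsupp.smul_sum, smul_smul]

@[simp] lemma algMulₗ_single_single (a b : MorF o) (c d : k) :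
    algMulₗ k (Finsupp.single a c) (Finsupp.single b d) = (c * d) • mulB k a b := by
  simp [algMulₗ, smul_smul]

lemma mulB_mk {l m n : ℕ} (f : Fin (o m) ↪o Fin (o n)) (g : Fin (o l) ↪o Fin (o m)) :
    mulB k (.mk m n f) (.mk l m g) = Finsupp.single (MorF.mk l n (g.trans f)) 1 := dif_pos rfl

lemma mulB_mk_of_ne {l m m' n : ℕ} (f : Fin (o m) ↪o Fin (o n)) (g : Fin (o l) ↪o Fin (o m'))
    (h : m' ≠ m) : mulB k (.mk m n f) (.mk l m' g) = 0 := dif_neg h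

lemma varpiA_single (a : MorF (fun m => m + 1)) (c : k) :
    varpiA k (Finsupp.single a c) = c • varpiBasis k a := by
  simp [varpiA]

lemma varpiBasis_mk {m n : ℕ} (f : Fin (m + 1) ↪o Fin (n + 1)) :
    varpiBasis k (.mk m n f) =
      if f 0 = 0 then Finsupp.single (MorF.mk m n (piAEmb f)) 1 else 0 := rfl

lemma varpiA_mulB (a b : MorF (fun m => m + 1)) :
    varpiA k (mulB k a b) = algMulₗ k (varpiBasis k a) (varpiBasis k b) := by
  obtain ⟨m, n, f, rfl⟩ := a.exists_eq_mk
  obtain ⟨l, m', g, rfl⟩ := b.exists_eq_mk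
  obtain rfl | h := eq_or_ne m' m
  · simp only [mulB_mk, varpiA_single, one_smul, varpiBasis_mk, trans_apply_zero_eq_zero_iff]
    split_ifs <;> simp_all [mulB_mk, piAEmb_trans]
  · rw [mulB_mk_of_ne k f g h, map_zero, varpiBasis_mk, varpiBasis_mk]
    split_ifs <;> simp [mulB_mk_of_ne k _ _ h]

lemma varpiA_algMulₗ : (algMulₗ k).compr₂ (varpiA k) = (algMulₗ k).compl₁₂ (varpiA k) (varpiA k) :=
  Finsupp.lhom_ext fun a c => Finsupp.lhom_ext fun b d => by
    simp [varpiA_single, varpiA_mulB, smul_smul, mul_comm]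

lemma varpiA_algMul (x y : MorF (fun m => m + 1) →₀ k) :
    varpiA k (algMul k x y) = algMul k (varpiA k x) (varpiA k y) := by
  simpa [algMul_eq_algMulₗ] using LinearMap.congr_fun₂ (varpiA_algMulₗ k) x y

def liftMor (s : MorF id) : MorF (fun m => m + 1) := .mk s.1 s.2.1 (liftEmb s.2.2)

lemma liftMor_mk {m n : ℕ} (f : Fin m ↪o Fin n) : liftMor (.mk m n f) = .mk m n (liftEmb f) := rfl

noncomputable def liftₗ : (MorF id →₀ k) →ₗ[k] (MorF (fun m => m + 1) →₀ k) :=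
  Finsupp.lmapDomain k k liftMor

lemma varpiA_comp_liftₗ : varpiA k ∘ₗ liftₗ k = LinearMap.id :=
  Finsupp.lhom_ext fun s c => by
    obtain ⟨m, n, f, rfl⟩ := s.exists_eq_mk
    simp [liftₗ, liftMor_mk, varpiA_single, varpiBasis_mk, piAEmb_liftEmb]

lemma varpiA_surjective : Function.Surjective (varpiA k) :=
  LinearMap.surjective_of_comp_eq_id _ _ (varpiA_comp_liftₗ k)

lemma single_mem_IdealA {a : MorF (fun m => m + 1)} (h : a.2.2 0 ≠ 0) (c : k) :
    Finsupp.single a c ∈ IdealA k := by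
  rw [← mul_one c, ← smul_eq_mul, ← Finsupp.smul_single]
  exact Submodule.smul_mem _ c (Submodule.subset_span ⟨a, h, rfl⟩)

lemma sub_liftₗ_varpiA_mem_IdealA (x : MorF (fun m => m + 1) →₀ k) :
    x - liftₗ k (varpiA k x) ∈ IdealA k := by
  suffices h : (IdealA k).mkQ ∘ₗ (LinearMap.id - liftₗ k ∘ₗ varpiA k) = 0 by
    rw [← Submodule.Quotient.mk_eq_zero, Submodule.Quotient.mk_sub]
    simpa using LinearMap.congr_fun h x
  refine Finsupp.lhom_ext fun a c => ?_
  obtain ⟨m, n, f, rfl⟩ := a.exists_eq_mk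
  by_cases hf : f 0 = 0
  · simp [varpiA_single, varpiBasis_mk, hf, liftₗ, liftMor_mk, liftEmb_piAEmb f hf]
  · simpa [varpiA_single, varpiBasis_mk, hf] using single_mem_IdealA k hf c

lemma ker_varpiA : LinearMap.ker (varpiA k) = IdealA k := by
  refine le_antisymm (fun x hx => ?_) (Submodule.span_le.mpr ?_)
  · simpa [LinearMap.mem_ker.mp hx] using sub_liftₗ_varpiA_mem_IdealA k x
  · rintro _ ⟨a, ha, rfl⟩
    simp [varpiA_single, varpiBasis, ha]

/-- `ϖ_a` is a surjective multiplicative `k`-linear map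
(i.e. an algebra homomorphism) with kernel `ℑ_a`; hence `k𝒞₊/ℑ_a ≅ k𝒞`. -/
theorem varpiA_hom :
    (∀ x y : MorF (fun m => m + 1) →₀ k,
      varpiA k (algMul k x y) = algMul k (varpiA k x) (varpiA k y)) ∧
    Function.Surjective (varpiA k) ∧
    LinearMap.ker (varpiA k) = IdealA k ∧
    Nonempty (((MorF (fun m => m + 1) →₀ k) ⧸ IdealA k) ≃ₗ[k] (MorF id →₀ k)) :=
  ⟨varpiA_algMul k, varpiA_surjective k, ker_varpiA k,
    ⟨(Submodule.quotEquivOfEq _ _ (ker_varpiA k).symm).trans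
      ((varpiA k).quotKerEquivOfSurjective (varpiA_surjective k))⟩⟩
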